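/- arXiv:1901.08367 — 3 statements merged into one kernel-verified Lean document; each statement's English description precedes it below -/
import Mathlib

section
/- If the common zero set in ℂℙ² of the quadrics Xf₂ − Yf₁, Xf₃ − Zf₁, Yf₃ − Zf₂ (for linear forms f₁,f₂,f₃ with (f₁,f₂,f₃) not a scalar multiple of (X,Y,Z)) contains a line ℓ, then the restrictions of (f₁,f₂,f₃) and (X,Y,Z) to ℓ are linearly dependent as triples of linear forms on ℓ. -/
open MvPolynomial Matrix


lemma deg1_single (d : Fin 3 →₀ ℕ) (hd : (Finsupp.weight (1 : Fin 3 → ℕ)) d = 1) :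
    ∃ i, d = Finsupp.single i 1 := by
  have h : d 0 + d 1 + d 2 = 1 := by
    have := Finsupp.weight_apply (1 : Fin 3 → ℕ) d
    rw [Finsupp.sum_fintype] at this
    · simpa [Fin.sum_univ_three, hd] using this.symm.trans hd
    · intro i; simp
  have h0 : d 0 = 1 ∧ d 1 = 0 ∧ d 2 = 0 ∨ d 1 = 1 ∧ d 0 = 0 ∧ d 2 = 0 ∨
      d 2 = 1 ∧ d 0 = 0 ∧ d 1 = 0 := by omega
  rcases h0 with ⟨a,b,c⟩|⟨a,b,c⟩|⟨a,b,c⟩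
  · exact ⟨0, by ext x; fin_cases x <;> simp [Finsupp.single_apply, a, b, c]⟩
  · exact ⟨1, by ext x; fin_cases x <;> simp [Finsupp.single_apply, a, b, c]⟩
  · exact ⟨2, by ext x; fin_cases x <;> simp [Finsupp.single_apply, a, b, c]⟩

lemma rep1 (g : MvPolynomial (Fin 3) ℂ) (hg : g.IsHomogeneous 1) :
    g = ∑ i : Fin 3, C (coeff (Finsupp.single i 1) g) * X i := by
  apply MvPolynomial.ext
  intro d
  rw [coeff_sum]
  simp only [coeff_C_mul, coeff_X']
  by_cases hd : ∃ i, d = Finsupp.single i 1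
  · obtain ⟨i, rfl⟩ := hd
    rw [Finset.sum_eq_single i]
    · simp
    · intro j _ hj
      simp [Finsupp.single_left_inj, (by simp [Finsupp.single_eq_single_iff] : (Finsupp.single j 1 = Finsupp.single i 1) ↔ j = i), hj]
    · simp
  · have : coeff d g = 0 := by
      by_contra hc
      exact hd (deg1_single d (hg hc))
    rw [this]
    rw [Finset.sum_eq_zero]
    intro j _
    have : ¬ (Finsupp.single j 1 = d) := fun h => hd ⟨j, h.symm⟩
    simp [this]

/-- dot product with fixed left vector, as a linear map. -/
noncomputable def dotL (a : Fin 3 → ℂ) : (Fin 3 → ℂ) →ₗ[ℂ] ℂ where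
  toFun v := a ⬝ᵥ v
  map_add' u v := dotProduct_add a u v
  map_smul' s v := by simp [dotProduct_smul, smul_eq_mul]

lemma exists_ker_ne (φ : (Fin 3 → ℂ) →ₗ[ℂ] ℂ) : ∃ u : Fin 3 → ℂ, u ≠ 0 ∧ φ u = 0 := by
  by_contra h
  push_neg at h
  have hinj : Function.Injective φ := by
    rw [← LinearMap.ker_eq_bot]
    rw [Submodule.eq_bot_iff]
    intro u hu
    by_contra hu0
    exact (h u hu0) hu
  have := LinearMap.finrank_le_finrank_of_injective hinj
  simp [Module.finrank_pi] at this

-- λ := eigenvalue lemma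
lemma eigen (φ : (Fin 3 → ℂ) →ₗ[ℂ] ℂ) (ψ : Fin 3 → ((Fin 3 → ℂ) →ₗ[ℂ] ℂ))
    (H : ∀ v, φ v = 0 → ∀ i j, v i * ψ j v = v j * ψ i v) :
    ∃ lam : ℂ, ∀ v, φ v = 0 → ∀ j, ψ j v = lam * v j := by
  -- each nonzero v in ker has an eigenvalue
  have key : ∀ v, φ v = 0 → v ≠ 0 → ∃ t : ℂ, ∀ j, ψ j v = t * v j := by
    intro v hv hv0
    obtain ⟨i, hi⟩ : ∃ i, v i ≠ 0 := by
      by_contra h; push_neg at h; exact hv0 (funext fun i => h i)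
    refine ⟨ψ i v / v i, fun j => ?_⟩
    field_simp
    linear_combination H v hv i j
  obtain ⟨u, hu0, hu⟩ := exists_ker_ne φ
  obtain ⟨lam, hlam⟩ := key u hu hu0
  refine ⟨lam, fun v hv j => ?_⟩
  by_cases hv0 : v = 0
  · simp [hv0]
  obtain ⟨t, ht⟩ := key v hv hv0
  -- show t = lam
  by_cases hdep : ∃ r : ℂ, v = r • u
  · obtain ⟨r, rfl⟩ := hdep
    have h1 := ht j
    have h2 := hlam j
    have h3 : (ψ j) (r • u) = r * (ψ j) u := by
      rw [LinearMap.map_smul]; simp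
    simp only [Pi.smul_apply, smul_eq_mul] at h1 ⊢
    rw [h3, h2] at h1
    rw [h3, h2]; ring
  · -- independent case: use u + v
    have huv : φ (u + v) = 0 := by rw [map_add, hu, hv, add_zero]
    have huv0 : u + v ≠ 0 := by
      intro h
      apply hdep
      refine ⟨-1, ?_⟩
      funext x
      have := congrFun h x
      simp only [Pi.add_apply, Pi.zero_apply] at this
      simp only [Pi.smul_apply, smul_eq_mul]
      linear_combination this
    obtain ⟨s, hs⟩ := key (u + v) huv huv0
    have comb : ∀ j, (lam - s) * u j + (t - s) * v j = 0 := by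
      intro j
      have h1 := hs j
      rw [map_add] at h1
      rw [hlam j, ht j] at h1
      simp only [Pi.add_apply] at h1
      ring_nf
      ring_nf at h1
      linear_combination h1
    -- if t ≠ s then v = ((lam-s)/(s-t)) • u, contradiction; if t = s then also lam = s ...
    by_cases hts : t = s
    · subst hts
      -- then (lam - t) * u j = 0 for all j; u ≠ 0 so lam = t
      by_cases hlt : lam = t
      · rw [ht j, hlt]
      · exfalso
        apply hu0
        funext x
        have := comb x
        simp only [sub_self, zero_mul, add_zero] at this
        have : u x = 0 := by
          rcases mul_eq_zero.1 this with h | h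
          · exact absurd (by linear_combination h : lam = t) hlt
          · exact h
        simpa using this
    · exfalso
      apply hdep
      refine ⟨(lam - s)/(s - t), ?_⟩
      funext x
      have := comb x
      have hst : s - t ≠ 0 := sub_ne_zero.2 (Ne.symm hts)
      rw [Pi.smul_apply, smul_eq_mul, div_mul_eq_mul_div, eq_div_iff hst]
      linear_combination -this

lemma eval_rep (g : MvPolynomial (Fin 3) ℂ) (hg : g.IsHomogeneous 1) (v : Fin 3 → ℂ) :
    eval v g = (fun i => coeff (Finsupp.single i 1) g) ⬝ᵥ v := by
  conv_lhs => rw [rep1 g hg]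
  simp [dotProduct, eval_sum]

/-- If the common zero set in ℂℙ² of the quadrics Xf₂ − Yf₁, Xf₃ − Zf₁, Yf₃ − Zf₂
contains the line ℓ = {L = 0}, then the restrictions of (f₁,f₂,f₃) and (X,Y,Z) to ℓ
(i.e. their reductions modulo L) are linearly dependent. -/
theorem stmt_8 (f₁ f₂ f₃ L : MvPolynomial (Fin 3) ℂ)
    (h₁ : f₁.IsHomogeneous 1) (h₂ : f₂.IsHomogeneous 1) (h₃ : f₃.IsHomogeneous 1)
    (hns : ¬ ∃ c : ℂ, f₁ = C c * X 0 ∧ f₂ = C c * X 1 ∧ f₃ = C c * X 2)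
    (hL : L.IsHomogeneous 1) (hL0 : L ≠ 0)
    (hline : ∀ v : Fin 3 → ℂ, v ≠ 0 → eval v L = 0 →
      eval v (X 0 * f₂ - X 1 * f₁) = 0 ∧
      eval v (X 0 * f₃ - X 2 * f₁) = 0 ∧
      eval v (X 1 * f₃ - X 2 * f₂) = 0) :
    ∃ a b : ℂ, (a ≠ 0 ∨ b ≠ 0) ∧
      C a * f₁ - C b * X 0 ∈ Ideal.span {L} ∧
      C a * f₂ - C b * X 1 ∈ Ideal.span {L} ∧
      C a * f₃ - C b * X 2 ∈ Ideal.span {L} := by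
  set F : Fin 3 → MvPolynomial (Fin 3) ℂ := ![f₁, f₂, f₃] with hF
  have hFh : ∀ j, (F j).IsHomogeneous 1 := by
    intro j; fin_cases j <;> simpa [hF] using by assumption
  set φ : (Fin 3 → ℂ) →ₗ[ℂ] ℂ := dotL (fun i => coeff (Finsupp.single i 1) L) with hφ
  set ψ : Fin 3 → ((Fin 3 → ℂ) →ₗ[ℂ] ℂ) :=
    fun j => dotL (fun i => coeff (Finsupp.single i 1) (F j)) with hψ
  have hφe : ∀ v, φ v = eval v L := fun v => (eval_rep L hL v).symm
  have hψe : ∀ j v, ψ j v = eval v (F j) := fun j v => (eval_rep (F j) (hFh j) v).symm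
  have H : ∀ v, φ v = 0 → ∀ i j, v i * ψ j v = v j * ψ i v := by
    intro v hv i j
    by_cases hv0 : v = 0
    · simp [hv0]
    obtain ⟨e1, e2, e3⟩ := hline v hv0 (by rw [← hφe]; exact hv)
    simp only [eval_sub, eval_mul, eval_X] at e1 e2 e3
    rw [hψe, hψe]
    fin_cases i <;> fin_cases j <;>
      simp only [hF, show ((⟨0, by omega⟩ : Fin 3)) = 0 from rfl,
        show ((⟨1, by omega⟩ : Fin 3)) = 1 from rfl,
        show ((⟨2, by omega⟩ : Fin 3)) = 2 from rfl,
        Matrix.cons_val_zero, Matrix.cons_val_one, Matrix.head_cons,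
        Matrix.cons_val_two, Matrix.tail_cons] <;>
      first
        | ring1
        | linear_combination e1
        | linear_combination e2
        | linear_combination e3
        | linear_combination -e1
        | linear_combination -e2
        | linear_combination -e3
  obtain ⟨lam, hlam⟩ := eigen φ ψ H
  have key : ∀ j : Fin 3, C 1 * (F j) - C lam * X j ∈ Ideal.span {L} := by
    intro j
    set δ : (Fin 3 → ℂ) →ₗ[ℂ] ℂ := ψ j - lam • LinearMap.proj j with hδ
    have hker : ⨅ _ : Unit, LinearMap.ker φ ≤ LinearMap.ker δ := by
      rw [iInf_const]
      intro v hv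
      have := hlam v hv j
      simp only [hδ, LinearMap.mem_ker, LinearMap.sub_apply, LinearMap.smul_apply,
        LinearMap.proj_apply, smul_eq_mul] at *
      rw [this]; ring
    have hmem := mem_span_of_iInf_ker_le_ker hker
    rw [Set.range_const] at hmem
    obtain ⟨μ, hμ⟩ := Submodule.mem_span_singleton.1 hmem
    have hpoly : C 1 * (F j) - C lam * X j = C μ * L := by
      apply MvPolynomial.funext
      intro v
      have hv := LinearMap.congr_fun hμ v
      simp only [hδ, LinearMap.sub_apply, LinearMap.smul_apply, LinearMap.proj_apply,
        smul_eq_mul] at hv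
      simp only [eval_sub, eval_mul, eval_C, eval_X, one_mul]
      rw [← hψe, ← hφe]
      linear_combination -hv
    rw [hpoly]
    exact Ideal.mem_span_singleton.2 ⟨C μ, by ring⟩
  refine ⟨1, lam, Or.inl one_ne_zero, ?_, ?_, ?_⟩
  · simpa [hF] using key 0
  · simpa [hF] using key 1
  · simpa [hF] using key 2
end

section
/- Let f₁, f₂, f₃ be linear forms over ℂ such that (f₁,f₂,f₃) is not a scalar multiple of (X,Y,Z). Then the common zero set in ℂℙ² of Xf₂ − Yf₁, Xf₃ − Zf₁, Yf₃ − Zf₂ does not contain an irreducible conic (the zero set of an irreducible homogeneous quadratic polynomial). -/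
open MvPolynomial

private lemma totalDegree_eq_zero_of_mul_homog {n : ℕ} {q s : MvPolynomial (Fin 3) ℂ}
    (hq : q.IsHomogeneous n) (hq0 : q ≠ 0) (hm : (q * s).IsHomogeneous n) :
    s.totalDegree = 0 := by
  by_contra hd
  set d := s.totalDegree with hdef
  have hs0 : s ≠ 0 := fun h => hd (by rw [hdef, h, totalDegree_zero])
  -- leading homogeneous component is nonzero
  obtain ⟨m₀, hm₀, hdeg⟩ := Finset.exists_mem_eq_sup s.support
    (support_nonempty.mpr hs0) (fun m : Fin 3 →₀ ℕ => m.toMultiset.card)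
  have hdeg' : m₀.degree = d := by
    rw [hdef, totalDegree_eq, hdeg]
    simp [Finsupp.degree_apply, Finsupp.card_toMultiset, Finsupp.sum]
  have hcoeff : coeff m₀ (homogeneousComponent d s) = coeff m₀ s := by
    rw [coeff_homogeneousComponent, if_pos hdeg']
  have hne : homogeneousComponent d s ≠ 0 := by
    intro h
    rw [h] at hcoeff
    exact (mem_support_iff.mp hm₀) hcoeff.symm
  -- compute the (n+d)-component of q*s
  have hsum : q * s = ∑ i ∈ Finset.range (d + 1), q * homogeneousComponent i s := by
    rw [← Finset.mul_sum, sum_homogeneousComponent]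
  have hcomp : homogeneousComponent (n + d) (q * s) = q * homogeneousComponent d s := by
    rw [hsum, map_sum]
    rw [Finset.sum_eq_single d]
    · exact homogeneousComponent_of_mem
        ((mem_homogeneousSubmodule _ _).mpr (hq.mul (homogeneousComponent_isHomogeneous d s)))
          |>.trans (if_pos rfl)
    · intro i _ hi
      rw [homogeneousComponent_of_mem
        ((mem_homogeneousSubmodule _ _).mpr (hq.mul (homogeneousComponent_isHomogeneous i s))),
        if_neg (by omega)]
    · intro h; exact absurd (Finset.self_mem_range_succ d) h
  have hzero : homogeneousComponent (n + d) (q * s) = 0 := by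
    rw [homogeneousComponent_of_mem ((mem_homogeneousSubmodule _ _).mpr hm), if_neg (by omega)]
  rw [hcomp] at hzero
  exact hne (by
    rcases mul_eq_zero.mp hzero with h | h
    · exact absurd h hq0
    · exact h)

private lemma key_dvd {n : ℕ} {q m : MvPolynomial (Fin 3) ℂ}
    (hq : q.IsHomogeneous n) (hq0 : q ≠ 0) (hm : m.IsHomogeneous n) (hdvd : q ∣ m) :
    ∃ c : ℂ, m = C c * q := by
  obtain ⟨s, rfl⟩ := hdvd
  have hd := totalDegree_eq_zero_of_mul_homog hq hq0 hm
  refine ⟨coeff 0 s, ?_⟩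
  have hsC : s = C (coeff 0 s) := by
    have hhom : s.IsHomogeneous 0 := (totalDegree_zero_iff_isHomogeneous (Fin 3)).mp hd
    ext d'
    rcases eq_or_ne d' 0 with rfl | hne
    · simp
    · rw [hhom.coeff_eq_zero (by simpa [Finsupp.degree_eq_zero_iff] using hne)]
      rw [coeff_C, if_neg (Ne.symm hne)]
  nth_rewrite 1 [hsC]
  ring

private lemma prime_X0 : Prime (X 0 : MvPolynomial (Fin 3) ℂ) := by
  rw [← MulEquiv.prime_iff (MvPolynomial.finSuccEquiv ℂ 2).toRingEquiv.toMulEquiv]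
  have : (MvPolynomial.finSuccEquiv ℂ 2).toRingEquiv.toMulEquiv (X 0) = Polynomial.X := by
    simpa using MvPolynomial.finSuccEquiv_X_zero (R := ℂ) (n := 2)
  rw [this]
  exact Polynomial.prime_X

/-- If (f₁,f₂,f₃) is not a scalar multiple of (X,Y,Z), then the common zero set in
ℂℙ² of the quadrics Xf₂ − Yf₁, Xf₃ − Zf₁, Yf₃ − Zf₂ contains no irreducible conic. -/
theorem stmt_9 (f₁ f₂ f₃ : MvPolynomial (Fin 3) ℂ)
    (h₁ : f₁.IsHomogeneous 1) (h₂ : f₂.IsHomogeneous 1) (h₃ : f₃.IsHomogeneous 1)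
    (hns : ¬ ∃ c : ℂ, f₁ = C c * X 0 ∧ f₂ = C c * X 1 ∧ f₃ = C c * X 2) :
    ¬ ∃ q : MvPolynomial (Fin 3) ℂ, Irreducible q ∧ q.IsHomogeneous 2 ∧
      ∀ v : Fin 3 → ℂ, v ≠ 0 → eval v q = 0 →
        eval v (X 0 * f₂ - X 1 * f₁) = 0 ∧
        eval v (X 0 * f₃ - X 2 * f₁) = 0 ∧
        eval v (X 1 * f₃ - X 2 * f₂) = 0 := by
  rintro ⟨q, hq_irr, hq_hom, hq_van⟩
  have hq0 : q ≠ 0 := hq_irr.ne_zero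
  set m₁ := X 0 * f₂ - X 1 * f₁ with hm₁def
  set m₂ := X 0 * f₃ - X 2 * f₁ with hm₂def
  set m₃ := X 1 * f₃ - X 2 * f₂ with hm₃def
  -- every zero of q kills all three minors (including v = 0)
  have hvan : ∀ (m : MvPolynomial (Fin 3) ℂ),
      (∀ v : Fin 3 → ℂ, v ≠ 0 → eval v q = 0 → eval v m = 0) →
      (eval (0 : Fin 3 → ℂ) m = 0) → q ∣ m := by
    intro m hv h0
    have hmem : m ∈ MvPolynomial.vanishingIdeal ℂ
        (MvPolynomial.zeroLocus ℂ (Ideal.span {q})) := by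
      rw [MvPolynomial.mem_vanishingIdeal_iff]
      intro x hx
      have hxq : eval x q = 0 := by
        rw [MvPolynomial.zeroLocus_span] at hx
        simpa [MvPolynomial.coe_aeval_eq_eval] using hx q (Set.mem_singleton q)
      rcases eq_or_ne x 0 with rfl | hx0
      · simpa [MvPolynomial.coe_aeval_eq_eval] using h0
      · simpa [MvPolynomial.coe_aeval_eq_eval] using hv x hx0 hxq
    rw [MvPolynomial.vanishingIdeal_zeroLocus_eq_radical] at hmem
    have hprime : Prime q := hq_irr.prime
    have : (Ideal.span {q}).IsPrime := (Ideal.span_singleton_prime hq0).mpr hprime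
    rw [this.radical] at hmem
    exact (Ideal.mem_span_singleton).mp hmem
  have hdvd₁ : q ∣ m₁ := hvan m₁ (fun v hv hq => (hq_van v hv hq).1) (by simp [hm₁def])
  have hdvd₂ : q ∣ m₂ := hvan m₂ (fun v hv hq => (hq_van v hv hq).2.1) (by simp [hm₂def])
  have hdvd₃ : q ∣ m₃ := hvan m₃ (fun v hv hq => (hq_van v hv hq).2.2) (by simp [hm₃def])
  -- minors are homogeneous of degree 2
  have hX : ∀ i : Fin 3, (X i : MvPolynomial (Fin 3) ℂ).IsHomogeneous 1 := fun i =>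
    isHomogeneous_X ℂ i
  have hm₁h : m₁.IsHomogeneous 2 := ((hX 0).mul h₂).sub ((hX 1).mul h₁)
  have hm₂h : m₂.IsHomogeneous 2 := ((hX 0).mul h₃).sub ((hX 2).mul h₁)
  have hm₃h : m₃.IsHomogeneous 2 := ((hX 1).mul h₃).sub ((hX 2).mul h₂)
  obtain ⟨c₁, hc₁⟩ := key_dvd hq_hom hq0 hm₁h hdvd₁
  obtain ⟨c₂, hc₂⟩ := key_dvd hq_hom hq0 hm₂h hdvd₂
  obtain ⟨c₃, hc₃⟩ := key_dvd hq_hom hq0 hm₃h hdvd₃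
  -- syzygy: Z m₁ - Y m₂ + X m₃ = 0
  have hsyz : X 2 * m₁ - X 1 * m₂ + X 0 * m₃ = 0 := by
    rw [hm₁def, hm₂def, hm₃def]; ring
  rw [hc₁, hc₂, hc₃] at hsyz
  have hlin : (C c₁ * X 2 - C c₂ * X 1 + C c₃ * X 0 : MvPolynomial (Fin 3) ℂ) = 0 := by
    have : (C c₁ * X 2 - C c₂ * X 1 + C c₃ * X 0) * q = 0 := by
      rw [← hsyz]; ring
    rcases mul_eq_zero.mp this with h | h
    · exact h
    · exact absurd h hq0
  have hc : c₁ = 0 ∧ c₂ = 0 ∧ c₃ = 0 := by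
    refine ⟨?_, ?_, ?_⟩
    · have := congrArg (coeff (Finsupp.single 2 1)) hlin
      simpa [coeff_sub, coeff_add, coeff_C_mul, coeff_X',
        Finsupp.single_eq_single_iff, show (2:Fin 3) ≠ 1 by decide,
        show (2:Fin 3) ≠ 0 by decide] using this
    · have := congrArg (coeff (Finsupp.single 1 1)) hlin
      simpa [coeff_sub, coeff_add, coeff_C_mul, coeff_X',
        Finsupp.single_eq_single_iff, show (2:Fin 3) ≠ 1 by decide,
        show (1:Fin 3) ≠ 0 by decide, sub_eq_zero, neg_eq_zero] using this
    · have := congrArg (coeff (Finsupp.single 0 1)) hlin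
      simpa [coeff_sub, coeff_add, coeff_C_mul, coeff_X',
        Finsupp.single_eq_single_iff, show (2:Fin 3) ≠ 0 by decide,
        show (1:Fin 3) ≠ 0 by decide] using this
  obtain ⟨hc1, hc2, hc3⟩ := hc
  rw [hc1] at hc₁; rw [hc2] at hc₂; rw [hc3] at hc₃
  simp only [map_zero, zero_mul] at hc₁ hc₂ hc₃
  -- so all minors vanish
  have e₁ : X 0 * f₂ = X 1 * f₁ := by
    have := sub_eq_zero.mp hc₁; exact this
  have e₂ : X 0 * f₃ = X 2 * f₁ := sub_eq_zero.mp hc₂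
  -- X 0 divides f₁
  have hX0prime : Prime (X 0 : MvPolynomial (Fin 3) ℂ) := prime_X0
  have hX0ne : (X 0 : MvPolynomial (Fin 3) ℂ) ≠ 0 := hX0prime.ne_zero
  have hdvdf₁ : (X 0 : MvPolynomial (Fin 3) ℂ) ∣ f₁ := by
    have : (X 0 : MvPolynomial (Fin 3) ℂ) ∣ X 1 * f₁ := ⟨f₂, e₁.symm⟩
    rcases hX0prime.dvd_mul.mp this with h | h
    · exact absurd (X_dvd_X.mp h) (by decide)
    · exact h
  obtain ⟨c, hcf⟩ := key_dvd (isHomogeneous_X ℂ 0) hX0ne h₁ hdvdf₁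
  refine hns ⟨c, hcf, ?_, ?_⟩
  · apply mul_left_cancel₀ hX0ne
    rw [e₁, hcf]; ring
  · apply mul_left_cancel₀ hX0ne
    rw [e₂, hcf]; ring
end

section
/- Let f₁, f₂, f₃ be linear forms over ℂ with (f₁,f₂,f₃) not a scalar multiple of (X,Y,Z). If the common zero set of the quadrics Xf₂ − Yf₁, Xf₃ − Zf₁, Yf₃ − Zf₂ in ℂℙ² is finite, then it contains at most 3 points. -/
open MvPolynomial
open scoped LinearAlgebra.Projectivization

lemma eval_hom1 (f : MvPolynomial (Fin 3) ℂ) (hf : f.IsHomogeneous 1) (v : Fin 3 → ℂ) :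
    eval v f = ∑ i : Fin 3, f.coeff (Finsupp.single i 1) * v i := by
  have hsub : f.support ⊆ Finset.univ.image (fun i : Fin 3 => Finsupp.single i 1) := by
    intro d hd
    have hdeg : d.degree = 1 := by
      have := hf (MvPolynomial.mem_support_iff.mp hd)
      rw [Finsupp.degree_eq_weight_one]; exact this
    obtain ⟨i, hi⟩ : ∃ i, d = Finsupp.single i 1 := by
      have hne : d.support.Nonempty := by
        rw [Finsupp.support_nonempty_iff]
        rintro rfl
        simp [Finsupp.degree] at hdeg
      obtain ⟨i, hi⟩ := hne
      refine ⟨i, ?_⟩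
      have h1 : 1 ≤ d i := Nat.one_le_iff_ne_zero.mpr (Finsupp.mem_support_iff.mp hi)
      have hle : d i ≤ d.degree := Finset.single_le_sum (fun j _ => Nat.zero_le _) hi
      have hdi : d i = 1 := le_antisymm (hdeg ▸ hle) h1
      have : d.support = {i} := by
        apply Finset.eq_singleton_iff_unique_mem.mpr
        refine ⟨hi, fun j hj => ?_⟩
        by_contra hne
        have h1j : 1 ≤ d j := Nat.one_le_iff_ne_zero.mpr (Finsupp.mem_support_iff.mp hj)
        have hij : i ≠ j := fun h => hne h.symm
        have : d i + d j ≤ d.degree := by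
          have hsub2 : ({i, j} : Finset (Fin 3)) ⊆ d.support := by
            intro x hx; simp only [Finset.mem_insert, Finset.mem_singleton] at hx
            rcases hx with rfl | rfl <;> assumption
          calc d i + d j = ∑ x ∈ ({i, j} : Finset (Fin 3)), d x := by
                rw [Finset.sum_pair hij]
            _ ≤ ∑ x ∈ d.support, d x := Finset.sum_le_sum_of_subset hsub2
            _ = d.degree := rfl
        omega
      rw [← hdi]
      exact (Finsupp.support_eq_singleton.mp this).2
    simp [hi]
  rw [eval_eq]
  rw [Finset.sum_subset hsub (fun d _ hd => by simp [MvPolynomial.mem_support_iff.not_left.mp hd])]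
  rw [Finset.sum_image (by intro a _ b _ h; exact Finsupp.single_left_injective one_ne_zero h)]
  refine Finset.sum_congr rfl fun i _ => ?_
  congr 1
  rw [Finset.prod_eq_single i (fun j _ hj => by simp [Finsupp.single_apply, hj.symm]) (by simp)]
  simp

/-- If (f₁,f₂,f₃) is not a scalar multiple of (X,Y,Z) and the common zero set in ℂℙ²
of the quadrics Xf₂ − Yf₁, Xf₃ − Zf₁, Yf₃ − Zf₂ is finite, then it has at most 3 points. -/
theorem stmt_10 (f₁ f₂ f₃ : MvPolynomial (Fin 3) ℂ)
    (h₁ : f₁.IsHomogeneous 1) (h₂ : f₂.IsHomogeneous 1) (h₃ : f₃.IsHomogeneous 1)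
    (hns : ¬ ∃ c : ℂ, f₁ = C c * X 0 ∧ f₂ = C c * X 1 ∧ f₃ = C c * X 2)
    (hfin : {p : ℙ ℂ (Fin 3 → ℂ) |
        eval p.rep (X 0 * f₂ - X 1 * f₁) = 0 ∧
        eval p.rep (X 0 * f₃ - X 2 * f₁) = 0 ∧
        eval p.rep (X 1 * f₃ - X 2 * f₂) = 0}.Finite) :
    {p : ℙ ℂ (Fin 3 → ℂ) |
        eval p.rep (X 0 * f₂ - X 1 * f₁) = 0 ∧
        eval p.rep (X 0 * f₃ - X 2 * f₁) = 0 ∧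
        eval p.rep (X 1 * f₃ - X 2 * f₂) = 0}.ncard ≤ 3 := by
  classical
  set S : Set (ℙ ℂ (Fin 3 → ℂ)) := {p : ℙ ℂ (Fin 3 → ℂ) |
        eval p.rep (X 0 * f₂ - X 1 * f₁) = 0 ∧
        eval p.rep (X 0 * f₃ - X 2 * f₁) = 0 ∧
        eval p.rep (X 1 * f₃ - X 2 * f₂) = 0} with hS
  -- the linear endomorphism
  set F : Fin 3 → MvPolynomial (Fin 3) ℂ := ![f₁, f₂, f₃] with hF
  set M : Matrix (Fin 3) (Fin 3) ℂ := fun i j => (F i).coeff (Finsupp.single j 1) with hM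
  set A : Module.End ℂ (Fin 3 → ℂ) := Matrix.mulVecLin M with hA
  have hFh : ∀ i, (F i).IsHomogeneous 1 := by
    intro i; fin_cases i <;> simpa [hF]
  have hAv : ∀ (v : Fin 3 → ℂ) (i : Fin 3), A v i = eval v (F i) := by
    intro v i
    rw [eval_hom1 _ (hFh i)]
    simp [hA, hM, Matrix.mulVecLin_apply, Matrix.mulVec, dotProduct]
    rfl
  -- membership in S is the eigenvector condition
  have hmem : ∀ p : ℙ ℂ (Fin 3 → ℂ), p ∈ S ↔ ∃ μ : ℂ, A p.rep = μ • p.rep := by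
    intro p
    set v := p.rep with hv
    have hvne : v ≠ 0 := p.rep_nonzero
    have e1 : eval v (X 0 * f₂ - X 1 * f₁) = v 0 * eval v f₂ - v 1 * eval v f₁ := by simp
    have e2 : eval v (X 0 * f₃ - X 2 * f₁) = v 0 * eval v f₃ - v 2 * eval v f₁ := by simp
    have e3 : eval v (X 1 * f₃ - X 2 * f₂) = v 1 * eval v f₃ - v 2 * eval v f₂ := by simp
    have hg : ∀ i, A v i = eval v (F i) := hAv v
    have hg0 : A v 0 = eval v f₁ := by rw [hg 0]; simp [hF]
    have hg1 : A v 1 = eval v f₂ := by rw [hg 1]; simp [hF]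
    have hg2 : A v 2 = eval v f₃ := by rw [hg 2]; simp [hF]
    constructor
    · rintro ⟨c1, c2, c3⟩
      rw [e1, sub_eq_zero] at c1
      rw [e2, sub_eq_zero] at c2
      rw [e3, sub_eq_zero] at c3
      obtain ⟨i, hi⟩ : ∃ i, v i ≠ 0 := by
        by_contra h; push_neg at h; exact hvne (funext h)
      refine ⟨A v i / v i, funext fun j => ?_⟩
      have hgv : ∀ k, A v k = ![eval v f₁, eval v f₂, eval v f₃] k := by
        intro k; fin_cases k
        · exact hg0
        · exact hg1
        · exact hg2
      have key : A v j * v i = A v i * v j := by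
        rw [hgv j, hgv i]
        fin_cases i <;> fin_cases j <;> simp
        · linear_combination c1
        · linear_combination c2
        · linear_combination -c1
        · linear_combination c3
        · linear_combination -c2
        · linear_combination -c3
      have : ((A v i / v i) • v) j = A v i / v i * v j := by simp
      rw [this]
      field_simp
      linear_combination key
    · rintro ⟨μ, hμ⟩
      have h0 : eval v f₁ = μ * v 0 := by rw [← hg0, hμ]; simp
      have h1 : eval v f₂ = μ * v 1 := by rw [← hg1, hμ]; simp
      have h2 : eval v f₃ = μ * v 2 := by rw [← hg2, hμ]; simp
      refine ⟨by rw [e1, h0, h1]; ring, by rw [e2, h0, h2]; ring, by rw [e3, h1, h2]; ring⟩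
  -- the eigenvalue function
  set φ : ℙ ℂ (Fin 3 → ℂ) → ℂ := fun p =>
    if h : ∃ μ : ℂ, A p.rep = μ • p.rep then Classical.choose h else 0 with hφ
  have hφS : ∀ p ∈ S, A p.rep = φ p • p.rep := by
    intro p hp
    have h := (hmem p).mp hp
    simp only [hφ, dif_pos h]
    exact Classical.choose_spec h
  -- eigenvalues are roots of the characteristic polynomial
  have hmapsto : ∀ p ∈ S, φ p ∈ (A.charpoly.roots.toFinset : Set ℂ) := by
    intro p hp
    have hev : A.HasEigenvalue (φ p) := by
      apply Module.End.hasEigenvalue_of_hasEigenvector (x := p.rep)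
      exact ⟨Module.End.mem_eigenspace_iff.mpr (hφS p hp), p.rep_nonzero⟩
    have hmin : (minpoly ℂ A).IsRoot (φ p) :=
      Module.End.hasEigenvalue_iff_isRoot.mp hev
    have hch : A.charpoly.IsRoot (φ p) := hmin.dvd (A.minpoly_dvd_charpoly)
    simp only [Finset.coe_sort_coe, Multiset.mem_toFinset, Finset.mem_coe]
    rw [Polynomial.mem_roots (A.charpoly_monic.ne_zero)]
    exact hch
  -- the eigenvalue function is injective on S
  have hinj : Set.InjOn φ S := by
    intro p hp q hq hpq
    by_contra hne
    set u := p.rep with hu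
    set w := q.rep with hw
    have hune : u ≠ 0 := p.rep_nonzero
    have hwne : w ≠ 0 := q.rep_nonzero
    set μ := φ p with hμ
    have hAu : A u = μ • u := hφS p hp
    have hAw : A w = μ • w := by have h := hφS q hq; rwa [← hpq] at h
    have hind : LinearIndependent ℂ ![w, u] := by
      rw [linearIndependent_fin2]
      refine ⟨hune, fun a ha => ?_⟩
      have ha0 : a ≠ 0 := by rintro rfl; simp at ha; exact hwne ha.symm
      have : Projectivization.mk ℂ w hwne = Projectivization.mk ℂ u hune := by
        rw [Projectivization.mk_eq_mk_iff]
        exact ⟨Units.mk0 a ha0, ha⟩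
      have hqp : q = p := by
        conv_lhs => rw [← q.mk_rep]
        conv_rhs => rw [← p.mk_rep]
        exact this
      exact hne hqp.symm
    have hnz : ∀ t : ℂ, u + t • w ≠ 0 := by
      intro t h
      have : t • w + (1 : ℂ) • u = 0 := by
        rw [one_smul, add_comm]; exact h
      exact one_ne_zero (hind.eq_zero_of_pair this).2
    set g : ℂ → ℙ ℂ (Fin 3 → ℂ) := fun t => Projectivization.mk ℂ (u + t • w) (hnz t) with hg'
    have hginj : Function.Injective g := by
      intro t s hts
      simp only [hg'] at hts
      rw [Projectivization.mk_eq_mk_iff] at hts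
      obtain ⟨a, ha⟩ := hts
      rw [Units.smul_def] at ha
      have hexp : ((a : ℂ) * s - t) • w + ((a : ℂ) - 1) • u = 0 := by
        rw [sub_smul, sub_smul]
        linear_combination (norm := module) ha
      obtain ⟨e1', e2'⟩ := hind.eq_zero_of_pair hexp
      have ha1 : (a : ℂ) = 1 := sub_eq_zero.mp e2'
      have hst : s = t := by
        have := sub_eq_zero.mp e1'
        rwa [ha1, one_mul] at this
      exact hst.symm
    have hgmem : ∀ t : ℂ, g t ∈ S := by
      intro t
      rw [hmem]
      obtain ⟨a, ha⟩ := Projectivization.exists_smul_eq_mk_rep ℂ (u + t • w) (hnz t)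
      refine ⟨μ, ?_⟩
      rw [← ha, Units.smul_def]
      rw [map_smul, map_add, hAu, map_smul, hAw]
      module
    exact Set.infinite_of_injective_forall_mem hginj hgmem hfin
  -- conclude by counting roots of the characteristic polynomial
  have hcount : S.ncard ≤ ((A.charpoly.roots.toFinset : Set ℂ)).ncard :=
    Set.ncard_le_ncard_of_injOn φ hmapsto hinj (A.charpoly.roots.toFinset.finite_toSet)
  refine hcount.trans ?_
  rw [Set.ncard_coe_finset]
  have hle1 : A.charpoly.roots.toFinset.card ≤ Multiset.card A.charpoly.roots :=
    Multiset.toFinset_card_le _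
  have hle2 : Multiset.card A.charpoly.roots ≤ A.charpoly.natDegree :=
    Polynomial.card_roots' _
  have hdeg : A.charpoly.natDegree = 3 := by
    rw [LinearMap.charpoly_natDegree]
    simp [Module.finrank_pi]
  omega
end
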